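/- Let x,y ∈ ℝ^d with x ≠ y, let f be a 1-field with dom(f) = {x,y}, f(x) = P_x, f(y) = P_y, M := Γ¹(f;{x,y}) > 0, and let s ∈ {−1,1} and c := (x+y)/2 + s(D_xf − D_yf)/(2M) satisfy P_x(c) − (sM/2)‖x−c‖² = P_y(c) + (sM/2)‖y−c‖² and D_xf + sM(x−c) = D_yf − sM(y−c); assume c ≠ x and c ≠ y. Suppose A(f;x,y) = 0. Define f̃_c := P_x(c) − (sM/2)‖x−c‖², D_cf̃ := D_xf + sM(x−c), P̃_c(z) := f̃_c + D_cf̃·(z−c), and F(z) := P̃_c(z) − (sM/2)·[(z−c)·(x−c)]²/‖x−c‖² + (sM/2)·[(z−c)·(y−c)]²/‖y−c‖² for z ∈ ℝ^d. Then the 1-field U on ℝ^d of first-order Taylor polynomials of F, U(a) := J_aF, is a minimal extension of f: U(x) = f(x), U(y) = f(y), and Γ¹(U;ℝ^d) = M. -/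

import Mathlib

open scoped ENNReal RealInnerProductSpace
open Metric Set

/-- A 1-field assigns to each point `x` the pair `(f_x, D_xf)` representing the affine
polynomial `a ↦ f_x + ⟪D_xf, a - x⟫`; `eval1 f x a` is the evaluation `f(x)(a)`. -/
noncomputable def eval1 {d : ℕ} (f : EuclideanSpace ℝ (Fin d) → ℝ × EuclideanSpace ℝ (Fin d))
    (x a : EuclideanSpace ℝ (Fin d)) : ℝ :=
  (f x).1 + ⟪(f x).2, a - x⟫

/-- `Γ¹(f;x,y) = 2 sup_a |f(x)(a) - f(y)(a)| / (‖x-a‖² + ‖y-a‖²)`. -/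
noncomputable def gamma1 {d : ℕ} (f : EuclideanSpace ℝ (Fin d) → ℝ × EuclideanSpace ℝ (Fin d))
    (x y : EuclideanSpace ℝ (Fin d)) : ℝ :=
  2 * ⨆ a : EuclideanSpace ℝ (Fin d),
    |eval1 f x a - eval1 f y a| / (‖x - a‖ ^ 2 + ‖y - a‖ ^ 2)

/-- `Γ¹(f;D) = sup {Γ¹(f;x,y) : x,y ∈ D, x ≠ y}`, valued in `[0,∞]`. -/
noncomputable def gamma1On {d : ℕ} (f : EuclideanSpace ℝ (Fin d) → ℝ × EuclideanSpace ℝ (Fin d))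
    (D : Set (EuclideanSpace ℝ (Fin d))) : ℝ≥0∞ :=
  ⨆ x ∈ D, ⨆ y ∈ D, ⨆ (_ : x ≠ y), ENNReal.ofReal (gamma1 f x y)

/-- `A(f;x,y) = (2(f_x - f_y) + ⟪D_xf + D_yf, y - x⟫) / ‖x-y‖²`. -/
noncomputable def Afun {d : ℕ} (f : EuclideanSpace ℝ (Fin d) → ℝ × EuclideanSpace ℝ (Fin d))
    (x y : EuclideanSpace ℝ (Fin d)) : ℝ :=
  (2 * ((f x).1 - (f y).1) + ⟪(f x).2 + (f y).2, y - x⟫) / ‖x - y‖ ^ 2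

section aux
variable {d : ℕ}
local notation "E" => EuclideanSpace ℝ (Fin d)

lemma hasGradientAt_quad (k α β : ℝ) (D u v c : E)
    (F : E → ℝ)
    (hF : ∀ z, F z = k + ⟪D, z - c⟫ + α * ⟪u, z - c⟫ ^ 2 + β * ⟪v, z - c⟫ ^ 2)
    (a : E) :
    HasGradientAt F (D + (2 * α * ⟪u, a - c⟫) • u + (2 * β * ⟪v, a - c⟫) • v) a := by
  have hFe : F = fun z => k + ⟪D, z - c⟫ + α * ⟪u, z - c⟫ ^ 2 + β * ⟪v, z - c⟫ ^ 2 :=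
    funext hF
  have hin : ∀ w : E, HasFDerivAt (fun z : E => ⟪w, z - c⟫) (innerSL ℝ w) a := by
    intro w
    simpa [inner_sub_right] using ((innerSL ℝ w).hasFDerivAt (x := a)).sub_const ⟪w, c⟫
  have hsq : ∀ w : E, HasFDerivAt (fun z : E => ⟪w, z - c⟫ ^ 2)
      ((2 * ⟪w, a - c⟫) • innerSL ℝ w) a := by
    intro w
    have h := (hin w).mul (hin w)
    have h2 : (⟪w, a - c⟫ • innerSL ℝ w + ⟪w, a - c⟫ • innerSL ℝ w)
        = (2 * ⟪w, a - c⟫) • innerSL ℝ w := by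
      rw [← add_smul]; ring_nf
    rw [h2] at h
    simpa only [pow_two, Pi.mul_def] using h
  have hfd : HasFDerivAt F
      (((innerSL ℝ D + α • ((2 * ⟪u, a - c⟫) • innerSL ℝ u)) +
        β • ((2 * ⟪v, a - c⟫) • innerSL ℝ v))) a := by
    rw [hFe]
    have := (((hasFDerivAt_const k a).add (hin D)).add ((hsq u).const_mul α)).add
      ((hsq v).const_mul β)
    simpa [add_assoc, smul_smul, Pi.add_def] using this
  rw [hasGradientAt_iff_hasFDerivAt]
  refine hfd.congr_fderiv ?_
  ext w
  simp [inner_add_left, real_inner_smul_left]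
  ring

lemma scalar_bound (M nu nv a1 a2 b1 b2 A B : ℝ) (hM : 0 ≤ M) (hnu : 0 < nu) (hnv : 0 < nv)
    (h1 : 0 ≤ a1) (h2 : 0 ≤ a2) (h3 : 0 ≤ b1) (h4 : 0 ≤ b2)
    (c1 : a1 ≤ nu * A) (c2 : a2 ≤ nv * A) (c3 : b1 ≤ nu * B) (c4 : b2 ≤ nv * B) :
    |(M / 2) / nv * (b2 - a2) - (M / 2) / nu * (b1 - a1)| ≤ M / 2 * (A + B) := by
  have f1 : (M / 2) / nu * a1 ≤ M / 2 * A := by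
    rw [div_mul_eq_mul_div, div_le_iff₀ hnu]; nlinarith
  have f2 : (M / 2) / nv * a2 ≤ M / 2 * A := by
    rw [div_mul_eq_mul_div, div_le_iff₀ hnv]; nlinarith
  have f3 : (M / 2) / nu * b1 ≤ M / 2 * B := by
    rw [div_mul_eq_mul_div, div_le_iff₀ hnu]; nlinarith
  have f4 : (M / 2) / nv * b2 ≤ M / 2 * B := by
    rw [div_mul_eq_mul_div, div_le_iff₀ hnv]; nlinarith
  have g1 : 0 ≤ (M / 2) / nu * a1 := by positivity
  have g2 : 0 ≤ (M / 2) / nv * a2 := by positivity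
  have g3 : 0 ≤ (M / 2) / nu * b1 := by positivity
  have g4 : 0 ≤ (M / 2) / nv * b2 := by positivity
  rw [abs_le]
  constructor <;> [nlinarith [f1, f2, f3, f4, g1, g2, g3, g4];
    nlinarith [f1, f2, f3, f4, g1, g2, g3, g4]]

lemma eval_quad (k α β : ℝ) (D u v c : E) (F : E → ℝ)
    (hF : ∀ z, F z = k + ⟪D, z - c⟫ + α * ⟪u, z - c⟫ ^ 2 + β * ⟪v, z - c⟫ ^ 2)
    (U : E → ℝ × E) (hU : ∀ a, U a = (F a, gradient F a)) (a z : E) :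
    eval1 U a z = F z - α * ⟪u, z - a⟫ ^ 2 - β * ⟪v, z - a⟫ ^ 2 := by
  have hg := (hasGradientAt_quad k α β D u v c F hF a).gradient
  rw [eval1, hU a]
  simp only
  rw [hg, hF a, hF z, ← sub_sub_sub_cancel_right z a c]
  simp only [inner_add_left, inner_sub_right, real_inner_smul_left]
  ring

lemma eval_sub_bound (k M s : ℝ) (D u v c : E) (hM : 0 ≤ M) (hs : s = 1 ∨ s = -1)
    (hu : u ≠ 0) (hv : v ≠ 0) (F : E → ℝ)
    (hF : ∀ z, F z = k + ⟪D, z - c⟫ + (-(s * M / 2) / ‖u‖ ^ 2) * ⟪u, z - c⟫ ^ 2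
      + ((s * M / 2) / ‖v‖ ^ 2) * ⟪v, z - c⟫ ^ 2)
    (U : E → ℝ × E) (hU : ∀ a, U a = (F a, gradient F a)) (a b z : E) :
    |eval1 U a z - eval1 U b z| ≤ M / 2 * (‖a - z‖ ^ 2 + ‖b - z‖ ^ 2) := by
  have hnu : (0:ℝ) < ‖u‖ ^ 2 := by
    have : 0 < ‖u‖ := norm_pos_iff.mpr hu
    positivity
  have hnv : (0:ℝ) < ‖v‖ ^ 2 := by
    have : 0 < ‖v‖ := norm_pos_iff.mpr hv
    positivity
  have cs : ∀ (w p : E), ⟪w, p⟫ ^ 2 ≤ ‖w‖ ^ 2 * ‖p‖ ^ 2 := by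
    intro w p
    have := real_inner_mul_inner_self_le w p
    rw [real_inner_self_eq_norm_sq, real_inner_self_eq_norm_sq] at this
    nlinarith [this]
  have hd : eval1 U a z - eval1 U b z
      = (-(s * M / 2) / ‖u‖ ^ 2) * (⟪u, z - b⟫ ^ 2 - ⟪u, z - a⟫ ^ 2)
        + ((s * M / 2) / ‖v‖ ^ 2) * (⟪v, z - b⟫ ^ 2 - ⟪v, z - a⟫ ^ 2) := by
    rw [eval_quad _ _ _ D u v c F hF U hU a z, eval_quad _ _ _ D u v c F hF U hU b z]
    ring
  rw [norm_sub_rev a z, norm_sub_rev b z, hd]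
  have sb := scalar_bound M (‖u‖ ^ 2) (‖v‖ ^ 2) (⟪u, z - a⟫ ^ 2) (⟪v, z - a⟫ ^ 2)
    (⟪u, z - b⟫ ^ 2) (⟪v, z - b⟫ ^ 2) (‖z - a‖ ^ 2) (‖z - b‖ ^ 2) hM hnu hnv
    (sq_nonneg _) (sq_nonneg _) (sq_nonneg _) (sq_nonneg _)
    (cs u (z - a)) (cs v (z - a)) (cs u (z - b)) (cs v (z - b))
  rcases hs with rfl | rfl
  · calc |(-(1 * M / 2) / ‖u‖ ^ 2) * (⟪u, z - b⟫ ^ 2 - ⟪u, z - a⟫ ^ 2)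
        + ((1 * M / 2) / ‖v‖ ^ 2) * (⟪v, z - b⟫ ^ 2 - ⟪v, z - a⟫ ^ 2)|
        = |(M / 2) / ‖v‖ ^ 2 * (⟪v, z - b⟫ ^ 2 - ⟪v, z - a⟫ ^ 2)
          - (M / 2) / ‖u‖ ^ 2 * (⟪u, z - b⟫ ^ 2 - ⟪u, z - a⟫ ^ 2)| := by
          ring_nf
      _ ≤ M / 2 * (‖z - a‖ ^ 2 + ‖z - b‖ ^ 2) := sb
  · calc |(-(-1 * M / 2) / ‖u‖ ^ 2) * (⟪u, z - b⟫ ^ 2 - ⟪u, z - a⟫ ^ 2)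
        + ((-1 * M / 2) / ‖v‖ ^ 2) * (⟪v, z - b⟫ ^ 2 - ⟪v, z - a⟫ ^ 2)|
        = |(M / 2) / ‖v‖ ^ 2 * (⟪v, z - b⟫ ^ 2 - ⟪v, z - a⟫ ^ 2)
          - (M / 2) / ‖u‖ ^ 2 * (⟪u, z - b⟫ ^ 2 - ⟪u, z - a⟫ ^ 2)| := by
          rw [← abs_neg]; ring_nf
      _ ≤ M / 2 * (‖z - a‖ ^ 2 + ‖z - b‖ ^ 2) := sb

lemma ortho_aux (M s fx fy : ℝ) (Dx Dy e m : E)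
    (hs : s = 1 ∨ s = -1) (hM : M ≠ 0)
    (hA' : 2 * (fx - fy) + ⟪Dx + Dy, (-2 : ℝ) • e⟫ = 0)
    (hw : Dx - Dy = (2 * M * s) • m)
    (hceq : (fx + ⟪Dx, m - e⟫) - s * M / 2 * ⟪e - m, e - m⟫
          = (fy + ⟪Dy, m + e⟫) + s * M / 2 * ⟪-e - m, -e - m⟫) :
    ⟪e - m, -e - m⟫ = 0 := by
  have hwm : ⟪Dx, m⟫ - ⟪Dy, m⟫ = (2 * M * s) * ⟪m, m⟫ := by
    rw [← inner_sub_left, hw, real_inner_smul_left]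
  have hme : ⟪m, e⟫ = ⟪e, m⟫ := real_inner_comm e m
  simp only [inner_sub_left, inner_sub_right, inner_add_left, inner_add_right,
    inner_neg_left, inner_neg_right, real_inner_smul_right] at hA' hceq ⊢
  rw [hme] at hceq ⊢
  have h0 : M * (⟪m, m⟫ - ⟪e, e⟫) = 0 := by
    rcases hs with rfl | rfl
    · linear_combination hceq - (1/2) * hA' - hwm
    · linear_combination -hceq + (1/2) * hA' + hwm
  have h1 : ⟪m, m⟫ - ⟪e, e⟫ = 0 := by
    rcases mul_eq_zero.mp h0 with h | h
    · exact absurd h hM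
    · exact h
  linear_combination h1

end aux

/-- The explicit minimal extension of a biponctual 1-field in the case `A(f;x,y) = 0`. -/
theorem minimal_extension_of_A_eq_zero {d : ℕ}
    (x y : EuclideanSpace ℝ (Fin d)) (hxy : x ≠ y)
    (f : EuclideanSpace ℝ (Fin d) → ℝ × EuclideanSpace ℝ (Fin d))
    (M s : ℝ) (hM : M = gamma1 f x y) (hMpos : 0 < M) (hs : s = 1 ∨ s = -1)
    (c : EuclideanSpace ℝ (Fin d))
    (hc : c = midpoint ℝ x y + (s / (2 * M)) • ((f x).2 - (f y).2))
    (hcx : c ≠ x) (hcy : c ≠ y)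
    (hceq1 : eval1 f x c - s * M / 2 * ‖x - c‖ ^ 2 = eval1 f y c + s * M / 2 * ‖y - c‖ ^ 2)
    (hceq2 : (f x).2 + (s * M) • (x - c) = (f y).2 - (s * M) • (y - c))
    (hA : Afun f x y = 0)
    (F : EuclideanSpace ℝ (Fin d) → ℝ)
    (hF : ∀ z : EuclideanSpace ℝ (Fin d),
      F z = (eval1 f x c - s * M / 2 * ‖x - c‖ ^ 2)
        + ⟪(f x).2 + (s * M) • (x - c), z - c⟫
        - s * M / 2 * ⟪z - c, x - c⟫ ^ 2 / ‖x - c‖ ^ 2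
        + s * M / 2 * ⟪z - c, y - c⟫ ^ 2 / ‖y - c‖ ^ 2)
    (U : EuclideanSpace ℝ (Fin d) → ℝ × EuclideanSpace ℝ (Fin d))
    (hU : ∀ a : EuclideanSpace ℝ (Fin d), U a = (F a, gradient F a)) :
    U x = f x ∧ U y = f y ∧ gamma1On U Set.univ = ENNReal.ofReal M := by
  have hMne : M ≠ 0 := ne_of_gt hMpos
  have hsne : s ≠ 0 := by rcases hs with rfl | rfl <;> norm_num
  have hu0 : x - c ≠ 0 := sub_ne_zero.mpr (Ne.symm hcx)
  have hv0 : y - c ≠ 0 := sub_ne_zero.mpr (Ne.symm hcy)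
  have hnu : (0:ℝ) < ‖x - c‖ ^ 2 := by
    have : 0 < ‖x - c‖ := norm_pos_iff.mpr hu0
    positivity
  have hnv : (0:ℝ) < ‖y - c‖ ^ 2 := by
    have : 0 < ‖y - c‖ := norm_pos_iff.mpr hv0
    positivity
  have hmid : midpoint ℝ x y = (2⁻¹:ℝ) • (x + y) := by
    rw [midpoint_eq_smul_add, invOf_eq_inv]
  -- abbreviations
  set e : EuclideanSpace ℝ (Fin d) := (2⁻¹:ℝ) • (x - y) with he_def
  set m : EuclideanSpace ℝ (Fin d) := c - midpoint ℝ x y with hm_def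
  have hxc : x - c = e - m := by rw [he_def, hm_def, hmid]; module
  have hyc : y - c = -e - m := by rw [he_def, hm_def, hmid]; module
  have hcx' : c - x = m - e := by rw [he_def, hm_def, hmid]; module
  have hcy' : c - y = m + e := by rw [he_def, hm_def, hmid]; module
  have hw : (f x).2 - (f y).2 = (2 * M * s) • m := by
    have h1 : m = (s / (2 * M)) • ((f x).2 - (f y).2) := by
      rw [hm_def, hc]; abel
    have hcoef : (2 * M * s) * (s / (2 * M)) = 1 := by
      rcases hs with rfl | rfl <;> field_simp
    rw [h1, smul_smul, hcoef, one_smul]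
  -- A = 0 in expanded form
  have hA' : 2 * ((f x).1 - (f y).1) + ⟪(f x).2 + (f y).2, (-2:ℝ) • e⟫ = 0 := by
    have hden : ‖x - y‖ ^ 2 ≠ 0 := by
      have : 0 < ‖x - y‖ := norm_pos_iff.mpr (sub_ne_zero.mpr hxy)
      positivity
    have h2 : y - x = (-2:ℝ) • e := by rw [he_def]; module
    rw [Afun, div_eq_zero_iff] at hA
    rcases hA with h | h
    · rw [← h2]; exact h
    · exact absurd h hden
  -- orthogonality
  have huv0 : ⟪x - c, y - c⟫ = 0 := by
    rw [hxc, hyc]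
    apply ortho_aux M s (f x).1 (f y).1 (f x).2 (f y).2 e m hs hMne hA' hw
    have hceq1' := hceq1
    rw [← real_inner_self_eq_norm_sq (x - c), ← real_inner_self_eq_norm_sq (y - c),
      eval1, eval1, hcx', hcy', hxc, hyc] at hceq1'
    exact hceq1'
  have hvu0 : ⟪y - c, x - c⟫ = 0 := by rw [real_inner_comm]; exact huv0
  -- normal form of F
  set k : ℝ := eval1 f x c - s * M / 2 * ‖x - c‖ ^ 2 with hk_def
  set D : EuclideanSpace ℝ (Fin d) := (f x).2 + (s * M) • (x - c) with hD_def
  have hF' : ∀ z, F z = k + ⟪D, z - c⟫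
      + (-(s * M / 2) / ‖x - c‖ ^ 2) * ⟪x - c, z - c⟫ ^ 2
      + ((s * M / 2) / ‖y - c‖ ^ 2) * ⟪y - c, z - c⟫ ^ 2 := by
    intro z
    rw [hF z, real_inner_comm (z - c) (x - c), real_inner_comm (z - c) (y - c)]
    ring
  have hgrad : ∀ a, gradient F a = D + (2 * (-(s * M / 2) / ‖x - c‖ ^ 2) * ⟪x - c, a - c⟫) • (x - c)
      + (2 * ((s * M / 2) / ‖y - c‖ ^ 2) * ⟪y - c, a - c⟫) • (y - c) := fun a =>
    (hasGradientAt_quad k _ _ D (x - c) (y - c) c F hF' a).gradient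
  -- U x = f x
  have i1 : ⟪x - c, x - c⟫ = ‖x - c‖ ^ 2 := real_inner_self_eq_norm_sq _
  have i1y : ⟪y - c, y - c⟫ = ‖y - c‖ ^ 2 := real_inner_self_eq_norm_sq _
  have hUx : U x = f x := by
    have hFx : F x = (f x).1 := by
      have i2 : ⟪D, x - c⟫ = ⟪(f x).2, x - c⟫ + s * M * ‖x - c‖ ^ 2 := by
        rw [hD_def, inner_add_left, real_inner_smul_left, i1]
      have i3 : eval1 f x c = (f x).1 - ⟪(f x).2, x - c⟫ := by
        rw [eval1, show c - x = -(x - c) from by module, inner_neg_right]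
        ring
      rw [hF' x, hk_def, i3, i2, hvu0, i1]
      field_simp
      ring
    have hgx : gradient F x = (f x).2 := by
      rw [hgrad x, hvu0, i1, hD_def]
      have hcoef : 2 * (-(s * M / 2) / ‖x - c‖ ^ 2) * ‖x - c‖ ^ 2 = -(s * M) := by
        field_simp
      rw [hcoef]
      module
    rw [hU x, hFx, hgx]
  -- U y = f y
  have hUy : U y = f y := by
    have hFy : F y = (f y).1 := by
      have i2 : ⟪D, y - c⟫ = ⟪(f y).2, y - c⟫ - s * M * ‖y - c‖ ^ 2 := by
        rw [hceq2, inner_sub_left, real_inner_smul_left, i1y]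
      have i3 : eval1 f y c = (f y).1 - ⟪(f y).2, y - c⟫ := by
        rw [eval1, show c - y = -(y - c) from by module, inner_neg_right]
        ring
      rw [hF' y, hceq1, i3, i2, huv0, i1y]
      field_simp
      ring
    have hgy : gradient F y = (f y).2 := by
      rw [hgrad y, huv0, i1y, hceq2]
      have hcoef : 2 * ((s * M / 2) / ‖y - c‖ ^ 2) * ‖y - c‖ ^ 2 = s * M := by
        field_simp
      rw [hcoef]
      module
    rw [hU y, hFy, hgy]
  refine ⟨hUx, hUy, ?_⟩
  -- key pointwise bound
  have hkey : ∀ a b z : EuclideanSpace ℝ (Fin d),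
      |eval1 U a z - eval1 U b z| ≤ M / 2 * (‖a - z‖ ^ 2 + ‖b - z‖ ^ 2) :=
    fun a b z => eval_sub_bound k M s D (x - c) (y - c) c hMpos.le hs hu0 hv0 F hF' U hU a b z
  have hupper : ∀ a b : EuclideanSpace ℝ (Fin d), a ≠ b → gamma1 U a b ≤ M := by
    intro a b hab
    rw [gamma1]
    have hpos : ∀ z : EuclideanSpace ℝ (Fin d), 0 < ‖a - z‖ ^ 2 + ‖b - z‖ ^ 2 := by
      intro z
      rcases eq_or_ne a z with rfl | h
      · have h2 : 0 < ‖b - a‖ := norm_pos_iff.mpr (sub_ne_zero.mpr hab.symm)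
        positivity
      · have h2 : 0 < ‖a - z‖ := norm_pos_iff.mpr (sub_ne_zero.mpr h)
        positivity
    have hsup : (⨆ z : EuclideanSpace ℝ (Fin d),
        |eval1 U a z - eval1 U b z| / (‖a - z‖ ^ 2 + ‖b - z‖ ^ 2)) ≤ M / 2 := by
      apply ciSup_le
      intro z
      rw [div_le_iff₀ (hpos z)]
      exact hkey a b z
    linarith
  have hMU : gamma1 U x y = M := by
    have hfun : (fun a => |eval1 U x a - eval1 U y a| / (‖x - a‖ ^ 2 + ‖y - a‖ ^ 2))
        = fun a => |eval1 f x a - eval1 f y a| / (‖x - a‖ ^ 2 + ‖y - a‖ ^ 2) := by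
      funext a
      rw [show eval1 U x a = eval1 f x a from by rw [eval1, eval1, hUx],
        show eval1 U y a = eval1 f y a from by rw [eval1, eval1, hUy]]
    rw [hM, gamma1, gamma1, hfun]
  apply le_antisymm
  · simp only [gamma1On, iSup_univ]
    exact iSup_le fun a => iSup_le fun b => iSup_le fun hab =>
      ENNReal.ofReal_le_ofReal (hupper a b hab)
  · simp only [gamma1On, iSup_univ]
    exact le_iSup_of_le x (le_iSup_of_le y (le_iSup_of_le hxy (le_of_eq (by rw [hMU]))))
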